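/- Define r(L) = (22L − 10)/(35L² − 50L + 75) for L ∈ ℝ. Then r(5/11) = 0, and consequently if the machine plays the policy m = (5/11)h, the human's best response for c_H is h = 0 and the game outcome is (0,0), the machine's global optimum. -/

import Mathlib

noncomputable def cH (h m : ℝ) : ℝ :=
  h^2/2 + 7*m^2/30 - h*m/3 + 2*h/15 - 22*m/75 + 12/125

noncomputable def r (L : ℝ) : ℝ := (22*L - 10) / (35*L^2 - 50*L + 75)

/-! Along the policy `m = L h` the human's cost is a quadratic in `h` with leading coefficient
`(35 L² - 50 L + 75) / 150 > 0` and linear coefficient `(10 - 22 L) / 75`; its vertex is `r L`,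
so `r L` is the human's best response, and `r (5/11) = 0` puts it at the machine's optimum. -/

lemma r_denom_pos (L : ℝ) : 0 < 35*L^2 - 50*L + 75 := by
  nlinarith [sq_nonneg (7*L - 5)]

lemma cH_policy_sub_cH_r (L h : ℝ) :
    cH h (L*h) - cH (r L) (L * r L) = (35*L^2 - 50*L + 75) / 150 * (h - r L)^2 := by
  have hr : r L * (35*L^2 - 50*L + 75) = 22*L - 10 := div_mul_cancel₀ _ (r_denom_pos L).ne'
  unfold cH
  linear_combination (h - r L) / 75 * hr

lemma cH_r_le_cH_policy (L h : ℝ) : cH (r L) (L * r L) ≤ cH h (L*h) := by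
  have hgap := cH_policy_sub_cH_r L h
  have : 0 ≤ (35*L^2 - 50*L + 75) / 150 * (h - r L)^2 := by
    have := r_denom_pos L
    positivity
  linarith

lemma r_five_div_eleven : r (5/11) = 0 := by
  norm_num [r]

theorem stmt_16 :
    r (5/11) = 0 ∧
    (∀ h : ℝ, cH 0 ((5/11) * 0) ≤ cH h ((5/11) * h)) := by
  refine ⟨r_five_div_eleven, fun h => ?_⟩
  simpa only [r_five_div_eleven] using cH_r_le_cH_policy (5/11) h
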